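/- Let A be a set of positive integers and let γ be any element of Γ_A other than the identity, with entries γ = [[a,b],[c,d]]. Then 1 ≤ a, a ≤ min(b,c), min(b,c) ≤ max(b,c), and max(b,c) < d. -/

import Mathlib

/-- The generator matrix `[[0,1],[1,a]]`. -/
def cfGen (a : ℕ) : Matrix (Fin 2) (Fin 2) ℤ := !![0, 1; 1, (a : ℤ)]

/-- The determinant-one semigroup `Γ_A`: all nonempty finite products of the
generators `[[0,1],[1,a]]·[[0,1],[1,a']]` with `a, a' ∈ A`. -/
def GammaSemigroup (A : Set ℕ) : Set (Matrix (Fin 2) (Fin 2) ℤ) :=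
  { M | ∃ l : List (ℕ × ℕ), l ≠ [] ∧ (∀ p ∈ l, p.1 ∈ A ∧ p.2 ∈ A) ∧
      M = (l.map (fun p => cfGen p.1 * cfGen p.2)).prod }

/-!
Each generator `[[0,1],[1,a]]·[[0,1],[1,a']] = [[1,a'],[a,1+aa']]` has entries `[[p,q],[r,s]]`
with `1 ≤ p ≤ min(q,r)` and `max(q,r) < s`. These inequalities are preserved under matrix
multiplication: they make all entries positive, and each entry of a product is a sum of products
of entries.
-/

def IncreasingEntries {R : Type*} [Preorder R] [One R] (M : Matrix (Fin 2) (Fin 2) R) : Prop :=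
  1 ≤ M 0 0 ∧ M 0 0 ≤ M 0 1 ∧ M 0 0 ≤ M 1 0 ∧ M 0 1 < M 1 1 ∧ M 1 0 < M 1 1

theorem IncreasingEntries.mul {R : Type*} [CommRing R] [LinearOrder R] [IsStrictOrderedRing R]
    {M N : Matrix (Fin 2) (Fin 2) R} (hM : IncreasingEntries M) (hN : IncreasingEntries N) :
    IncreasingEntries (M * N) := by
  obtain ⟨h1, h2, h3, h4, h5⟩ := hM
  obtain ⟨g1, g2, g3, g4, g5⟩ := hN
  simp only [IncreasingEntries, Matrix.mul_apply, Fin.sum_univ_two]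
  refine ⟨?_, ?_, ?_, ?_, ?_⟩ <;> nlinarith

theorem cfGen_mul_cfGen (a b : ℕ) : cfGen a * cfGen b = !![1, (b : ℤ); (a : ℤ), 1 + a * b] := by
  ext i j
  fin_cases i <;> fin_cases j <;> simp [cfGen, Matrix.mul_apply]

theorem increasingEntries_cfGen_mul_cfGen {a b : ℕ} (ha : 0 < a) (hb : 0 < b) :
    IncreasingEntries (cfGen a * cfGen b) := by
  have ha' : (1 : ℤ) ≤ a := by exact_mod_cast ha
  have hb' : (1 : ℤ) ≤ b := by exact_mod_cast hb
  simp only [cfGen_mul_cfGen, IncreasingEntries, Matrix.of_apply, Matrix.cons_val',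
    Matrix.cons_val_zero, Matrix.cons_val_one, Matrix.empty_val', Matrix.cons_val_fin_one]
  refine ⟨le_rfl, hb', ha', ?_, ?_⟩ <;> nlinarith

theorem increasingEntries_of_mem_gammaSemigroup {A : Set ℕ} (hA : ∀ a ∈ A, 0 < a)
    {γ : Matrix (Fin 2) (Fin 2) ℤ} (hγ : γ ∈ GammaSemigroup A) : IncreasingEntries γ := by
  obtain ⟨l, hl, hmem, rfl⟩ := hγ
  refine List.prod_induction_nonempty _ (fun _ _ => IncreasingEntries.mul) (by simpa) ?_
  simp only [List.mem_map, forall_exists_index, and_imp, forall_apply_eq_imp_iff₂]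
  exact fun p hp => increasingEntries_cfGen_mul_cfGen (hA _ (hmem p hp).1) (hA _ (hmem p hp).2)

theorem entries_of_gamma_semigroup (A : Set ℕ) (hA : ∀ a ∈ A, 0 < a)
    (γ : Matrix (Fin 2) (Fin 2) ℤ) (hγ : γ ∈ GammaSemigroup A) :
    1 ≤ γ 0 0 ∧ γ 0 0 ≤ min (γ 0 1) (γ 1 0) ∧
      min (γ 0 1) (γ 1 0) ≤ max (γ 0 1) (γ 1 0) ∧
      max (γ 0 1) (γ 1 0) < γ 1 1 := by
  obtain ⟨h00, h01, h10, h01_11, h10_11⟩ := increasingEntries_of_mem_gammaSemigroup hA hγ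
  exact ⟨h00, le_min h01 h10, min_le_max, max_lt h01_11 h10_11⟩
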